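/- Fix reserves x > 0, y > 0, a fee rate λ with 0 < λ < 1, and an input Δx > 0. Let Δy = f_{(x,y)}(Δx) = y − x·y/(x + (1−λ)·Δx) be the output of the first trade, and update the pool reserves to x' = x + Δx and y' = y − Δy. Then the output of trading Δy back through the same pool, Δx'' = f_{(y',x')}(Δy) = x' − y'·x'/(y' + (1−λ)·Δy), satisfies Δx'' < Δx. That is, a round trip through a single CPMM pool with positive fee strictly loses tokens, so no profit can be made by trading a token and immediately trading it back in the same pool. -/

import Mathlib

/-- Round trip through a single CPMM pool with positive fee `0 < λ < 1` strictly
loses tokens: trade `Δx > 0` of token X for `Δy = f_{(x,y)}(Δx)` of token Y,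
update the reserves to `x' = x + Δx`, `y' = y − Δy`; then trading `Δy` back
returns `Δx'' = f_{(y',x')}(Δy) < Δx`. -/
theorem cpmm_round_trip_loses (x y lam Δx : ℝ) (hx : 0 < x) (hy : 0 < y)
    (hlam0 : 0 < lam) (hlam1 : lam < 1) (hΔx : 0 < Δx)
    (Δy : ℝ) (hΔy : Δy = y - x * y / (x + (1 - lam) * Δx))
    (x' y' : ℝ) (hx' : x' = x + Δx) (hy' : y' = y - Δy) :
    x' - y' * x' / (y' + (1 - lam) * Δy) < Δx := by
  have hc : 0 < 1 - lam := by linarith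
  have hd1 : 0 < x + (1 - lam) * Δx := by positivity
  have hΔypos : Δy = (1 - lam) * Δx * y / (x + (1 - lam) * Δx) := by
    rw [hΔy]; field_simp; ring
  have hy'eq : y' = x * y / (x + (1 - lam) * Δx) := by
    rw [hy', hΔy]; ring
  have hden : y' + (1 - lam) * Δy
      = y * (x + (1 - lam) ^ 2 * Δx) / (x + (1 - lam) * Δx) := by
    rw [hy'eq, hΔypos]; field_simp
  have hdenpos : 0 < y' + (1 - lam) * Δy := by rw [hden]; positivity
  rw [sub_lt_iff_lt_add, ← sub_lt_iff_lt_add', lt_div_iff₀ hdenpos, hden, hy'eq, hx', mul_div_assoc, div_mul_eq_mul_div, ← mul_div_assoc]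
  rw [show x + Δx - Δx = x by ring, ← mul_div_assoc, div_lt_div_iff₀ hd1 hd1]
  have h2 : (0:ℝ) < 2 - lam := by linarith
  nlinarith [mul_pos (mul_pos (mul_pos hlam0 h2) (mul_pos (mul_pos hx hy) hΔx)) hd1]
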